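/- arXiv:0803.2091 — 2 statements merged into one kernel-verified Lean document; each statement's English description precedes it below -/
import Mathlib

section
/- Let α be a full dual vector of a finite game. If a pure strategy profile c ∈ C has probability zero in all correlated equilibria, then σ(c) := ∏_{i∈N} σ_i(c_i) = 0 for every σ = (σ_i)_{i∈N} ∈ ∏_i C_i/α_i. Moreover, if a pure strategy c_i of player i has marginal probability zero in all correlated equilibria, then σ_i(c_i) = 0 for every σ_i ∈ C_i/α_i. -/
open scoped BigOperators

section Prelim

variable {S : Type} [Fintype S] [DecidableEq S]

/-- `σ` is a mixed strategy (probability distribution) on the finite set `S`. -/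
def IsMixed (σ : S → ℝ) : Prop := (∀ s, 0 ≤ σ s) ∧ ∑ s, σ s = 1

/-- The Dirac measure `δ_s`. -/
def dirac (s : S) : S → ℝ := fun d => if d = s then 1 else 0

/-- `α_i * σ_i`, the image of the mixed strategy `σ` under the deviation plan `αᵢ`,
where `αᵢ c d` is the probability `αᵢ(d | c)`. -/
def devImage (αᵢ : S → S → ℝ) (σ : S → ℝ) : S → ℝ := fun d => ∑ c, σ c * αᵢ c d

/-- `σ` is `αᵢ`-stationary: `αᵢ * σ = σ`. -/
def IsDevStationary (αᵢ : S → S → ℝ) (σ : S → ℝ) : Prop := devImage αᵢ σ = σ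

/-- A nonempty `B ⊆ S` is `αᵢ`-absorbing if `supp (αᵢ * c) ⊆ B` for all `c ∈ B`. -/
def IsAbsorbing (αᵢ : S → S → ℝ) (B : Finset S) : Prop :=
  B.Nonempty ∧ ∀ c ∈ B, ∀ d, 0 < αᵢ c d → d ∈ B

/-- A minimal absorbing set: an absorbing set containing no proper nonempty absorbing subset. -/
def IsMinimalAbsorbing (αᵢ : S → S → ℝ) (B : Finset S) : Prop :=
  IsAbsorbing αᵢ B ∧ ∀ B' ⊆ B, IsAbsorbing αᵢ B' → B' = B

/-- `C_i/α_i`: the set of `αᵢ`-stationary mixed strategies whose support is contained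
in some minimal `αᵢ`-absorbing set. -/
def ReducedSet (αᵢ : S → S → ℝ) : Set (S → ℝ) :=
  {σ | IsMixed σ ∧ IsDevStationary αᵢ σ ∧
    ∃ B : Finset S, IsMinimalAbsorbing αᵢ B ∧ ∀ s, σ s ≠ 0 → s ∈ B}

end Prelim

section Games

variable {N : Type} [Fintype N] [DecidableEq N]
  {C : N → Type} [∀ i, Fintype (C i)] [∀ i, DecidableEq (C i)]

/-- Marginal probability of the pure strategy `cᵢ` of player `i` under `μ`. -/
def marginal (μ : (∀ j, C j) → ℝ) (i : N) (cᵢ : C i) : ℝ :=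
  ∑ c : ∀ j, C j, if c i = cᵢ then μ c else 0

/-- The incentive sum `∑_{c_{-i}} μ(c_{-i},cᵢ)[U_i(c_{-i},dᵢ) − U_i(c_{-i},cᵢ)]`. -/
def incentiveSum (U : ∀ i : N, (∀ j, C j) → ℝ) (μ : (∀ j, C j) → ℝ) (i : N) (cᵢ dᵢ : C i) : ℝ :=
  ∑ c : ∀ j, C j, if c i = cᵢ then μ c * (U i (Function.update c i dᵢ) - U i c) else 0

/-- Correlated equilibrium. -/
def IsCorrelatedEq (U : ∀ i : N, (∀ j, C j) → ℝ) (μ : (∀ j, C j) → ℝ) : Prop :=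
  (∀ c, 0 ≤ μ c) ∧ (∑ c : ∀ j, C j, μ c) = 1 ∧
    ∀ (i : N) (cᵢ dᵢ : C i), incentiveSum U μ i cᵢ dᵢ ≤ 0

/-- Multilinear extension: payoff of player `i` under the mixed strategy profile `σ`. -/
def mixedPayoff (U : ∀ i : N, (∀ j, C j) → ℝ) (σ : ∀ j, C j → ℝ) (i : N) : ℝ :=
  ∑ c : ∀ j, C j, (∏ j, σ j (c j)) * U i c

/-- Nash equilibrium. -/
def IsNash (U : ∀ i : N, (∀ j, C j) → ℝ) (σ : ∀ j, C j → ℝ) : Prop :=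
  (∀ i, IsMixed (σ i)) ∧
  ∀ (i : N) (dᵢ : C i),
    mixedPayoff U (Function.update σ i (dirac dᵢ)) i ≤ mixedPayoff U σ i

/-- `D(c, α) = ∑_i [U_i(c_{-i}, α_i * c_i) − U_i(c)]`. -/
def devGain (U : ∀ i : N, (∀ j, C j) → ℝ) (α : ∀ i, C i → C i → ℝ) (c : ∀ j, C j) : ℝ :=
  ∑ i, ((∑ dᵢ, α i (c i) dᵢ * U i (Function.update c i dᵢ)) - U i c)

/-- A dual vector: a profile of deviation plans with `D(c,α) ≥ 0` for all `c`. -/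
def IsDualVector (U : ∀ i : N, (∀ j, C j) → ℝ) (α : ∀ i, C i → C i → ℝ) : Prop :=
  (∀ (i : N) (cᵢ : C i), IsMixed (α i cᵢ)) ∧ ∀ c, 0 ≤ devGain U α c

/-- A strong dual vector: `D(c,α) > 0` whenever `c` has probability zero in all
correlated equilibria. -/
def IsStrong (U : ∀ i : N, (∀ j, C j) → ℝ) (α : ∀ i, C i → C i → ℝ) : Prop :=
  ∀ c : ∀ j, C j, (∀ μ, IsCorrelatedEq U μ → μ c = 0) → 0 < devGain U α c

/-- A full dual vector: `α_i(dᵢ|cᵢ) > 0` whenever `β_i(dᵢ|cᵢ) > 0` for some dual vector `β`. -/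
def IsFull (U : ∀ i : N, (∀ j, C j) → ℝ) (α : ∀ i, C i → C i → ℝ) : Prop :=
  ∀ (i : N) (cᵢ dᵢ : C i),
    (∃ β : ∀ i, C i → C i → ℝ, IsDualVector U β ∧ 0 < β i cᵢ dᵢ) → 0 < α i cᵢ dᵢ

end Games

/-!
By LP duality (Farkas' lemma), a profile `c` that no correlated equilibrium charges admits a dual
vector `β` with `D(c, β) > 0`. Since `α` is full, the average `γ = (α + β) / 2` is a dual vector with
the same positivity pattern as `α`, hence with the same minimal absorbing sets; a `γ`-stationary
strategy supported in a minimal absorbing set charges all of it. Under a profile `τ` of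
`γ`-stationary strategies the expectation of `D(·, γ)` vanishes, and `D(·, γ) ≥ 0`, so `D(·, γ)`
vanishes on the support of `τ`. If `σ(c) ≠ 0`, choosing `τ_i` on the minimal absorbing set that
carries `σ_i` puts `c` in that support, contradicting `D(c, γ) > 0`. The marginal statement follows
by completing `σ_i` and `c_i` with reduced strategies of the other players and points of their
supports.
-/

open Finset

section ConicalHull

variable {E : Type*} [AddCommGroup E] [Module ℝ E] {κ : Type*} [Fintype κ]

lemma mem_hull_range_iff {v : κ → E} {x : E} :
    x ∈ PointedCone.hull ℝ (Set.range v) ↔ ∃ w : κ → ℝ, 0 ≤ w ∧ ∑ k, w k • v k = x := by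
  rw [Submodule.mem_span_range_iff_exists_fun]
  constructor
  · rintro ⟨c, rfl⟩
    exact ⟨fun k => c k, fun k => (c k).2, rfl⟩
  · rintro ⟨w, hw, rfl⟩
    exact ⟨fun k => ⟨w k, hw k⟩, rfl⟩

variable [DecidableEq κ]

lemma exists_nonneg_sum_eq_of_not_linearIndepOn {v : κ → E} {w : κ → ℝ} (hw : 0 ≤ w)
    (h : ¬LinearIndepOn ℝ v ({k | w k ≠ 0} : Finset κ)) :
    ∃ w' : κ → ℝ, 0 ≤ w' ∧ ({k | w' k ≠ 0} : Finset κ) ⊂ ({k | w k ≠ 0} : Finset κ) ∧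
      ∑ k, w' k • v k = ∑ k, w k • v k := by
  set s : Finset κ := {k | w k ≠ 0}
  obtain ⟨g, hg, k₀, hk₀, hgk₀⟩ := not_linearIndepOn_finset_iff.mp h
  wlog hpos : 0 < g k₀ generalizing g
  · refine this (-g) (by simp [neg_smul, sum_neg_distrib, hg]) (neg_ne_zero.mpr hgk₀) ?_
    exact neg_pos.mpr (lt_of_le_of_ne (not_lt.mp hpos) hgk₀)
  -- the largest step along `-g` that keeps the weights nonnegative
  obtain ⟨j, hj, hmin⟩ := exists_min_image {k ∈ s | 0 < g k} (fun k => w k / g k)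
    ⟨k₀, mem_filter.mpr ⟨hk₀, hpos⟩⟩
  obtain ⟨hjs, hgj⟩ := mem_filter.mp hj
  set t := w j / g j
  have ht : 0 ≤ t := div_nonneg (hw j) hgj.le
  set w' : κ → ℝ := fun k => w k - t * if k ∈ s then g k else 0
  have hw's : ∀ k ∉ s, w' k = 0 := fun k hk => by
    simp only [w', if_neg hk, mul_zero, sub_zero]
    simpa [s] using hk
  refine ⟨w', fun k => ?_, ?_, ?_⟩
  · by_cases hks : k ∈ s
    · by_cases hgk : 0 < g k
      · have := hmin k (mem_filter.mpr ⟨hks, hgk⟩)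
        rw [le_div_iff₀ hgk] at this
        simp only [w', if_pos hks, Pi.zero_apply]
        linarith
      · simp only [w', if_pos hks, Pi.zero_apply]
        linarith [show 0 ≤ w k from hw k, mul_nonpos_of_nonneg_of_nonpos ht (not_lt.mp hgk)]
    · simp [hw's k hks]
  · rw [Finset.ssubset_iff_of_subset]
    · refine ⟨j, hjs, ?_⟩
      simp [w', hjs, t, hgj.ne']
    · intro k hk
      by_contra hks
      simp [hw's k hks] at hk
  · simp only [w', sub_smul, sum_sub_distrib, mul_smul, ← smul_sum, ite_smul, zero_smul,
      sum_ite_mem, univ_inter, hg, smul_zero, sub_zero]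

lemma exists_linearIndepOn_nonneg_sum_eq (v : κ → E) {w : κ → ℝ} (hw : 0 ≤ w) :
    ∃ w' : κ → ℝ, 0 ≤ w' ∧ LinearIndepOn ℝ v ({k | w' k ≠ 0} : Finset κ) ∧
      ∑ k, w' k • v k = ∑ k, w k • v k := by
  obtain ⟨w', ⟨hw', hsum⟩, hmin⟩ :=
    (InvImage.wf (fun w' : κ → ℝ => #({k | w' k ≠ 0} : Finset κ)) wellFounded_lt).has_min
      {w' | 0 ≤ w' ∧ ∑ k, w' k • v k = ∑ k, w k • v k} ⟨w, hw, rfl⟩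
  refine ⟨w', hw', by_contra fun hli => ?_, hsum⟩
  obtain ⟨w'', hw'', hlt, hsum'⟩ := exists_nonneg_sum_eq_of_not_linearIndepOn hw' hli
  exact hmin w'' ⟨hw'', hsum'.trans hsum⟩ (card_lt_card hlt)

variable [TopologicalSpace E] [IsTopologicalAddGroup E] [ContinuousSMul ℝ E] [T2Space E]

lemma isClosed_hull_range (v : κ → E) : IsClosed (PointedCone.hull ℝ (Set.range v) : Set E) := by
  have hcover : (PointedCone.hull ℝ (Set.range v) : Set E) =
      ⋃ (T : Finset κ) (_ : LinearIndepOn ℝ v T),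
        Fintype.linearCombination ℝ (fun k : (T : Set κ) => v k) '' Set.Ici 0 := by
    ext x
    simp only [SetLike.mem_coe, Set.mem_iUnion, Set.mem_image, Set.mem_Ici,
      Fintype.linearCombination_apply]
    constructor
    · intro hx
      obtain ⟨w, hw, rfl⟩ := mem_hull_range_iff.mp hx
      obtain ⟨w', hw', hli, hsum⟩ := exists_linearIndepOn_nonneg_sum_eq v hw
      refine ⟨_, hli, fun k => w' k, fun k => hw' k, ?_⟩
      rw [← hsum, ← sum_filter_of_ne (p := fun k => w' k ≠ 0) fun k _ hk h => hk (by simp [h])]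
      exact sum_coe_sort _ (fun k => w' k • v k)
    · rintro ⟨T, -, y, hy, rfl⟩
      exact Submodule.sum_mem _ fun k _ =>
        PointedCone.smul_mem _ (hy k) (PointedCone.subset_hull ⟨k, rfl⟩)
  rw [hcover]
  refine isClosed_iUnion_of_finite fun T => isClosed_iUnion_of_finite fun hT => ?_
  exact (LinearMap.isClosedEmbedding_of_injective
    (LinearMap.ker_eq_bot.mpr hT.fintypeLinearCombination_injective)).isClosedMap _ isClosed_Ici

end ConicalHull

theorem farkas_alternative {J K : Type*} [Fintype J] [Fintype K] (a : K → J → ℝ) (c : J → ℝ) :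
    (∃ x : J → ℝ, 0 ≤ x ∧ (∀ k, ∑ j, a k j * x j ≤ 0) ∧ 0 < ∑ j, c j * x j) ∨
      ∃ y : K → ℝ, 0 ≤ y ∧ ∀ j, c j ≤ ∑ k, y k * a k j := by
  classical
  -- `c ≤ ∑ k, y k • a k` for some `y ≥ 0` iff `c` lies in the cone spanned by the `a k` and the `-eⱼ`
  let v : K ⊕ J → J → ℝ := Sum.elim a fun j => -Pi.single j 1
  by_cases hc : c ∈ PointedCone.hull ℝ (Set.range v)
  · right
    obtain ⟨w, hw, hwc⟩ := mem_hull_range_iff.mp hc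
    refine ⟨fun k => w (Sum.inl k), fun k => hw _, fun j => ?_⟩
    have := congrFun hwc j
    simp only [v, Finset.sum_apply, Pi.smul_apply, smul_eq_mul, Fintype.sum_sum_type, Sum.elim_inl,
      Sum.elim_inr, Pi.neg_apply, Pi.single_apply, mul_neg, mul_ite, mul_one, mul_zero,
      sum_neg_distrib, sum_ite_eq, mem_univ, if_true] at this
    linarith [show 0 ≤ w (Sum.inr j) from hw _]
  · left
    obtain ⟨f, hf, hfc⟩ := ProperCone.hyperplane_separation_point
      (⟨PointedCone.hull ℝ (Set.range v), isClosed_hull_range v⟩ : ProperCone ℝ (J → ℝ)) hc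
    have hgen : ∀ k, 0 ≤ f (v k) := fun k => hf _ (PointedCone.subset_hull ⟨k, rfl⟩)
    have hf_apply : ∀ u : J → ℝ, f u = -∑ j, u j * f (-Pi.single j 1) := fun u => by
      conv_lhs => rw [← univ_sum_single u]
      simp only [map_sum, map_neg, mul_neg, sum_neg_distrib, neg_neg]
      refine sum_congr rfl fun j _ => ?_
      rw [← smul_eq_mul, ← map_smul, ← Pi.single_smul', smul_eq_mul, mul_one]
    refine ⟨fun j => f (-Pi.single j 1), fun j => hgen (Sum.inr j), fun k => ?_, ?_⟩
    · linarith [hf_apply (a k), show 0 ≤ f (a k) from hgen (Sum.inl k)]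
    · linarith [hf_apply c]

section Markov

variable {S : Type} {P Q : S → S → ℝ} {B : Finset S} {π : S → ℝ}

lemma isMinimalAbsorbing_congr (h : ∀ x d, 0 < P x d ↔ 0 < Q x d) :
    IsMinimalAbsorbing P B ↔ IsMinimalAbsorbing Q B := by
  simp only [IsMinimalAbsorbing, IsAbsorbing, h]

variable [Fintype S]

lemma IsMixed.exists_ne_zero (hπ : IsMixed π) : ∃ x, π x ≠ 0 := by
  by_contra! h
  simpa [h] using hπ.2

lemma sum_devImage (hP : ∀ x, IsMixed (P x)) (π : S → ℝ) :
    ∑ d, devImage P π d = ∑ x, π x := by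
  simp only [devImage]
  rw [sum_comm]
  simp [← mul_sum, (hP _).2]

lemma isDevStationary_of_devImage_le (hP : ∀ x, IsMixed (P x))
    (h : ∀ d, devImage P π d ≤ π d) : IsDevStationary P π :=
  funext fun d => (sum_eq_sum_iff_of_le fun d _ => h d).mp (sum_devImage hP π) d (mem_univ d)

lemma IsAbsorbing.sum_mul_le (hP : ∀ x, IsMixed (P x)) (hB : IsAbsorbing P B) {x : S}
    (hx : x ∈ B) {g : S → ℝ} {M : ℝ} (hg : ∀ z ∈ B, g z ≤ M) : ∑ z, P x z * g z ≤ M :=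
  calc ∑ z, P x z * g z ≤ ∑ z, P x z * M := sum_le_sum fun z _ => by
        rcases ((hP x).1 z).eq_or_lt with h | h
        · simp [← h]
        · exact mul_le_mul_of_nonneg_left (hg z (hB.2 x hx z h)) h.le
    _ = M := by rw [← sum_mul, (hP x).2, one_mul]

lemma exists_isDevStationary_of_isAbsorbing (hP : ∀ x, IsMixed (P x)) (hB : IsAbsorbing P B) :
    ∃ π, IsMixed π ∧ IsDevStationary P π ∧ ∀ x, π x ≠ 0 → x ∈ B := by
  classical
  -- rows `inl z` say `(π P) z ≤ π z`, rows `inr z` say `π z ≤ 0` for `z ∉ B`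
  let a : S ⊕ S → S → ℝ := Sum.elim (fun z x => P x z - if x = z then 1 else 0)
    (fun z x => if x = z ∧ z ∉ B then 1 else 0)
  rcases farkas_alternative a 1 with ⟨π, hπ, ha, hpos⟩ | ⟨y, hy, hya⟩
  · have hst : IsDevStationary P π := isDevStationary_of_devImage_le hP fun d => by
      have := ha (Sum.inl d)
      simp only [a, Sum.elim_inl, sub_mul, sum_sub_distrib, ite_mul, one_mul, zero_mul,
        sum_ite_eq', mem_univ, if_true, sub_nonpos] at this
      simpa only [devImage, mul_comm] using this
    have hsupp : ∀ x, π x ≠ 0 → x ∈ B := fun x hx => by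
      by_contra hxB
      have := ha (Sum.inr x)
      simp only [a, Sum.elim_inr, ite_mul, one_mul, zero_mul, hxB, not_false_eq_true, and_true,
        sum_ite_eq', mem_univ, if_true] at this
      exact hx (le_antisymm this (hπ x))
    simp only [Pi.one_apply, one_mul] at hpos
    refine ⟨fun x => π x / ∑ x', π x', ⟨fun x => div_nonneg (hπ x) hpos.le, ?_⟩, ?_,
      fun x hx => hsupp x (by simpa [hpos.ne'] using hx)⟩
    · rw [← sum_div, div_self hpos.ne']
    · funext d
      simp only [devImage, div_mul_eq_mul_div, ← sum_div]
      exact congrArg (· / _) (congrFun hst d)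
  · -- the dual inequality `1 ≤ (P g) x - g x` fails where `g = y ∘ inl` is maximal on `B`
    obtain ⟨x, hx, hmax⟩ := exists_max_image B (fun z => y (Sum.inl z)) hB.1
    have hdual := hya x
    have hoff : ∑ z, y (Sum.inr z) * a (Sum.inr z) x = 0 :=
      sum_eq_zero fun z _ => by
        simp only [a, Sum.elim_inr]
        rw [if_neg (by rintro ⟨rfl, h⟩; exact h hx), mul_zero]
    simp only [Fintype.sum_sum_type, hoff, add_zero] at hdual
    simp only [a, Sum.elim_inl, mul_sub, sum_sub_distrib, mul_ite, mul_one, mul_zero,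
      sum_ite_eq, mem_univ, if_true, Pi.one_apply] at hdual
    have := hB.sum_mul_le hP hx hmax
    simp only [mul_comm (P x _)] at this
    linarith

lemma isAbsorbing_support [DecidableEq S] (hP : ∀ x d, 0 ≤ P x d) (hπ : IsMixed π)
    (hst : IsDevStationary P π) : IsAbsorbing P {x | π x ≠ 0} := by
  refine ⟨?_, fun x hx d hd => ?_⟩
  · by_contra hempty
    have hzero : ∀ x, π x = 0 := fun x => by
      by_contra hx
      exact hempty ⟨x, by simpa using hx⟩
    simpa [hzero] using hπ.2
  · have hx : 0 < π x := (hπ.1 x).lt_of_ne' (by simpa using hx)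
    have : π x * P x d ≤ π d := by
      rw [← congrFun hst d]
      exact single_le_sum (f := fun c => π c * P c d)
        (fun c _ => mul_nonneg (hπ.1 c) (hP c d)) (mem_univ x)
    simpa using (mul_pos hx hd).trans_le this |>.ne'

lemma IsMinimalAbsorbing.ne_zero_of_isDevStationary (hB : IsMinimalAbsorbing P B)
    (hP : ∀ x d, 0 ≤ P x d) (hπ : IsMixed π) (hst : IsDevStationary P π)
    (hsupp : ∀ x, π x ≠ 0 → x ∈ B) {x : S} (hx : x ∈ B) : π x ≠ 0 := by
  classical
  have := hB.2 _ (fun y hy => hsupp y (by simpa using hy)) (isAbsorbing_support hP hπ hst)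
  rw [← this] at hx
  simpa using hx

lemma exists_isMinimalAbsorbing [Nonempty S] (P : S → S → ℝ) : ∃ B, IsMinimalAbsorbing P B := by
  obtain ⟨B, hB, hmin⟩ := wellFounded_lt.has_min {B : Finset S | IsAbsorbing P B}
    ⟨univ, univ_nonempty, fun _ _ d _ => mem_univ d⟩
  exact ⟨B, hB, fun B' hB'B hB' => of_not_not fun hne => hmin B' hB' (hB'B.ssubset_of_ne hne)⟩

lemma reducedSet_nonempty [Nonempty S] (hP : ∀ x, IsMixed (P x)) : (ReducedSet P).Nonempty := by
  obtain ⟨B, hB⟩ := exists_isMinimalAbsorbing P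
  obtain ⟨π, hπ, hst, hsupp⟩ := exists_isDevStationary_of_isAbsorbing hP hB.1
  exact ⟨π, hπ, hst, B, hB, hsupp⟩

end Markov

section Games

variable {N : Type} [Fintype N] [DecidableEq N] {C : N → Type} [∀ i, Fintype (C i)]

lemma sum_prod_mul_sum_update (σ : ∀ j, C j → ℝ) {i : N} {P : C i → C i → ℝ}
    (hst : IsDevStationary P (σ i)) (f : (∀ j, C j) → ℝ) :
    ∑ c : ∀ j, C j, (∏ j, σ j (c j)) * ∑ d, P (c i) d * f (Function.update c i d) =
      ∑ c : ∀ j, C j, (∏ j, σ j (c j)) * f c := by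
  let swap : (∀ j, C j) × C i → (∀ j, C j) × C i := fun p => (Function.update p.1 i p.2, p.1 i)
  have hswap : Function.Involutive swap := fun p => by simp [swap]
  have hprod : ∀ (c : ∀ j, C j) d,
      ∏ j, σ j (Function.update c i d j) = σ i d * ∏ j ∈ univ \ {i}, σ j (c j) := fun c d => by
    simp only [Function.apply_update (fun j => σ j), prod_update_of_mem (mem_univ i)]
  calc ∑ c : ∀ j, C j, (∏ j, σ j (c j)) * ∑ d, P (c i) d * f (Function.update c i d)
      = ∑ p : (∀ j, C j) × C i,
          (∏ j, σ j (p.1 j)) * (P (p.1 i) p.2 * f (Function.update p.1 i p.2)) := by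
        simp only [Fintype.sum_prod_type, mul_sum]
    _ = ∑ p : (∀ j, C j) × C i, (∏ j, σ j ((swap p).1 j)) *
          (P ((swap p).1 i) (swap p).2 * f (Function.update (swap p).1 i (swap p).2)) :=
        (Equiv.sum_comp (hswap.toPerm swap) _).symm
    _ = ∑ c : ∀ j, C j, (∑ d, σ i d * P d (c i)) * (∏ j ∈ univ \ {i}, σ j (c j)) * f c := by
        simp only [Fintype.sum_prod_type, swap, hprod, Function.update_self,
          Function.update_idem, Function.update_eq_self, sum_mul]
        refine sum_congr rfl fun c _ => sum_congr rfl fun d _ => by ring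
    _ = ∑ c : ∀ j, C j, (∏ j, σ j (c j)) * f c := by
        refine sum_congr rfl fun c _ => ?_
        rw [show ∑ d, σ i d * P d (c i) = σ i (c i) from congrFun hst (c i),
          prod_eq_mul_prod_sdiff_singleton_of_mem (mem_univ i)]

variable (U : N → (∀ j, C j) → ℝ) {α β : ∀ i, C i → C i → ℝ}

lemma sum_prod_mul_devGain_eq_zero (σ : ∀ j, C j → ℝ) (hst : ∀ i, IsDevStationary (α i) (σ i)) :
    ∑ c : ∀ j, C j, (∏ j, σ j (c j)) * devGain U α c = 0 := by
  simp only [devGain, mul_sum]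
  rw [sum_comm]
  refine sum_eq_zero fun i _ => ?_
  simp only [mul_sub, sum_sub_distrib]
  rw [sum_prod_mul_sum_update σ (hst i), sub_self]

lemma devGain_eq_zero_of_isDevStationary (hα : IsDualVector U α) {σ : ∀ j, C j → ℝ}
    (hσ : ∀ i, IsMixed (σ i)) (hst : ∀ i, IsDevStationary (α i) (σ i)) {c : ∀ j, C j}
    (hc : ∏ j, σ j (c j) ≠ 0) : devGain U α c = 0 := by
  have hnn : ∀ c' : ∀ j, C j, 0 ≤ (∏ j, σ j (c' j)) * devGain U α c' := fun c' =>
    mul_nonneg (prod_nonneg fun j _ => (hσ j).1 _) (hα.2 c')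
  have := (sum_eq_zero_iff_of_nonneg fun c' _ => hnn c').mp
    (sum_prod_mul_devGain_eq_zero U σ hst) c (mem_univ c)
  exact (mul_eq_zero.mp this).resolve_left hc

lemma devGain_midpoint (c : ∀ j, C j) :
    devGain U (fun i x d => (α i x d + β i x d) / 2) c = (devGain U α c + devGain U β c) / 2 := by
  simp only [devGain, ← sum_add_distrib, sum_div]
  refine sum_congr rfl fun i _ => ?_
  simp only [add_div, add_mul, sum_add_distrib, div_mul_eq_mul_div, ← sum_div]
  ring

lemma IsDualVector.midpoint (hα : IsDualVector U α) (hβ : IsDualVector U β) :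
    IsDualVector U fun i x d => (α i x d + β i x d) / 2 := by
  refine ⟨fun i x => ⟨fun d => ?_, ?_⟩, fun c => ?_⟩
  · linarith [(hα.1 i x).1 d, (hβ.1 i x).1 d]
  · rw [← sum_div, sum_add_distrib, (hα.1 i x).2, (hβ.1 i x).2]
    norm_num
  · rw [devGain_midpoint]
    linarith [hα.2 c, hβ.2 c]

def weightedGain (w : ∀ i, C i → C i → ℝ) (a : ∀ j, C j) : ℝ :=
  ∑ i, ∑ d, w i (a i) d * (U i (Function.update a i d) - U i a)

lemma devGain_eq_weightedGain (hα : ∀ i x, ∑ d, α i x d = 1) (a : ∀ j, C j) :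
    devGain U α a = weightedGain U α a := by
  simp only [devGain, weightedGain, mul_sub, sum_sub_distrib, ← sum_mul, hα, one_mul]

lemma exists_devGain_eq_mul_weightedGain {w : ∀ i, C i → C i → ℝ} (hw : ∀ i x d, 0 ≤ w i x d) :
    ∃ β : ∀ i, C i → C i → ℝ, (∀ i x, IsMixed (β i x)) ∧
      ∃ ε > 0, ∀ a, devGain U β a = ε * weightedGain U w a := by
  classical
  set T := ∑ i, ∑ x, ∑ d, w i x d
  have hT : 0 ≤ T := sum_nonneg fun i _ => sum_nonneg fun x _ => sum_nonneg fun d _ => hw i x d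
  set ε := 1 / (T + 1)
  have hε : 0 < ε := by positivity
  have hrow : ∀ i x, ε * ∑ d, w i x d ≤ 1 := fun i x => by
    have : ∑ d, w i x d ≤ T :=
      (single_le_sum (f := fun x => ∑ d, w i x d) (fun x _ => sum_nonneg fun d _ => hw i x d)
        (mem_univ x)).trans
      (single_le_sum (f := fun i => ∑ x, ∑ d, w i x d)
        (fun i _ => sum_nonneg fun x _ => sum_nonneg fun d _ => hw i x d) (mem_univ i))
    rw [show ε = (T + 1)⁻¹ from one_div _, inv_mul_le_iff₀ (by positivity)]
    linarith
  -- the diagonal entries of `β` do not contribute to `devGain`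
  let β : ∀ i, C i → C i → ℝ := fun i x d =>
    ε * w i x d + if d = x then 1 - ε * ∑ d', w i x d' else 0
  have hβsum : ∀ i x, ∑ d, β i x d = 1 := fun i x => by
    simp only [β, sum_add_distrib, ← mul_sum, sum_ite_eq', mem_univ, if_true]
    ring
  refine ⟨β, fun i x => ⟨fun d => ?_, hβsum i x⟩, ε, hε, fun a => ?_⟩
  · have := mul_nonneg hε.le (hw i x d)
    simp only [β]
    split_ifs <;> linarith [hrow i x]
  · rw [devGain_eq_weightedGain U hβsum]
    simp only [weightedGain, β, add_mul, sum_add_distrib,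
      ite_mul, zero_mul, sum_ite_eq', mem_univ, if_true, Function.update_eq_self, sub_self,
      mul_zero, add_zero, mul_sum, mul_assoc]

variable [∀ i, DecidableEq (C i)]

lemma exists_weightedGain_ge_indicator {c : ∀ j, C j}
    (hc : ∀ μ, IsCorrelatedEq U μ → μ c = 0) :
    ∃ w : ∀ i, C i → C i → ℝ, (∀ i x d, 0 ≤ w i x d) ∧
      ∀ a, (if a = c then 1 else 0) ≤ weightedGain U w a := by
  -- a correlated equilibrium charging `c` is, up to scaling, some `μ ≥ 0` with `A μ ≤ 0`, `μ c > 0`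
  let A : (Σ i, C i × C i) → (∀ j, C j) → ℝ := fun k a =>
    if a k.1 = k.2.1 then U k.1 (Function.update a k.1 k.2.2) - U k.1 a else 0
  rcases farkas_alternative A (fun a => if a = c then 1 else 0) with
    ⟨μ, hμ, hA, hpos⟩ | ⟨y, hy, hyA⟩
  · exfalso
    simp only [ite_mul, one_mul, zero_mul, sum_ite_eq', mem_univ, if_true] at hpos
    set s := ∑ a, μ a
    have hs : 0 < s := hpos.trans_le (single_le_sum (fun a _ => hμ a) (mem_univ c))
    have hCE : IsCorrelatedEq U fun a => μ a / s := by
      refine ⟨fun a => div_nonneg (hμ a) hs.le, by rw [← sum_div, div_self hs.ne'], fun i x d => ?_⟩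
      have hinc : incentiveSum U μ i x d ≤ 0 := by
        simpa only [incentiveSum, A, ite_mul, zero_mul, mul_comm (U _ _ - _)] using hA ⟨i, x, d⟩
      have hscale : incentiveSum U (fun a => μ a / s) i x d = incentiveSum U μ i x d / s := by
        simp only [incentiveSum, sum_div]
        exact sum_congr rfl fun a _ => by split_ifs <;> ring
      rw [hscale]
      exact div_nonpos_of_nonpos_of_nonneg hinc hs.le
    exact (div_pos hpos hs).ne' (hc _ hCE)
  · refine ⟨fun i x d => y ⟨i, x, d⟩, fun i x d => hy _, fun a => (hyA a).trans_eq ?_⟩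
    simp [A, weightedGain, Fintype.sum_sigma, Fintype.sum_prod_type, mul_ite, sum_ite_eq]

lemma exists_isDualVector_devGain_pos {c : ∀ j, C j} (hc : ∀ μ, IsCorrelatedEq U μ → μ c = 0) :
    ∃ β, IsDualVector U β ∧ 0 < devGain U β c := by
  obtain ⟨w, hw, hwc⟩ := exists_weightedGain_ge_indicator U hc
  obtain ⟨β, hβ, ε, hε, hβw⟩ := exists_devGain_eq_mul_weightedGain U hw
  refine ⟨β, ⟨hβ, fun a => ?_⟩, ?_⟩
  · rw [hβw]
    exact mul_nonneg hε.le ((by split_ifs <;> norm_num : (0 : ℝ) ≤ _).trans (hwc a))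
  · rw [hβw]
    exact mul_pos hε (one_pos.trans_le (by simpa using hwc c))

lemma apply_eq_zero_of_marginal_eq_zero {μ : (∀ j, C j) → ℝ} (hμ : ∀ a, 0 ≤ μ a) {i : N}
    {cᵢ : C i} (hm : marginal μ i cᵢ = 0) {c : ∀ j, C j} (hc : c i = cᵢ) : μ c = 0 := by
  have := (sum_eq_zero_iff_of_nonneg fun a _ => ?_).mp hm c (mem_univ c)
  · simpa [hc] using this
  · split_ifs
    exacts [hμ a, le_rfl]

theorem prod_eq_zero_of_forall_isCorrelatedEq (hα : IsDualVector U α) (hfull : IsFull U α)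
    {c : ∀ j, C j} (hc : ∀ μ, IsCorrelatedEq U μ → μ c = 0) {σ : ∀ i, C i → ℝ}
    (hσ : ∀ i, σ i ∈ ReducedSet (α i)) : ∏ i, σ i (c i) = 0 := by
  by_contra hσc
  obtain ⟨β, hβ, hβc⟩ := exists_isDualVector_devGain_pos U hc
  set γ : ∀ i, C i → C i → ℝ := fun i x d => (α i x d + β i x d) / 2
  have hγ : IsDualVector U γ := hα.midpoint U hβ
  have hγc : 0 < devGain U γ c := by
    rw [devGain_midpoint]
    linarith [hα.2 c]
  -- fullness of `α`: averaging with `β` creates no new positive transition probabilities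
  have hpattern : ∀ i x d, 0 < α i x d ↔ 0 < γ i x d := fun i x d => by
    have hβ0 := (hβ.1 i x).1 d
    refine ⟨fun h => by simp only [γ]; linarith, fun h => ?_⟩
    by_contra hα0
    have hβpos : 0 < β i x d := by simp only [γ] at h; linarith [not_lt.mp hα0]
    exact hα0 (hfull i x d ⟨β, hβ, hβpos⟩)
  choose B hB hσB using fun i => (hσ i).2.2
  have hBγ : ∀ i, IsMinimalAbsorbing (γ i) (B i) := fun i =>
    (isMinimalAbsorbing_congr (hpattern i)).mp (hB i)
  choose τ hτ hτst hτB using fun i =>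
    exists_isDevStationary_of_isAbsorbing (hγ.1 i) (hBγ i).1
  have hτc : ∏ i, τ i (c i) ≠ 0 := prod_ne_zero_iff.mpr fun i _ =>
    (hBγ i).ne_zero_of_isDevStationary (fun x d => (hγ.1 i x).1 d) (hτ i) (hτst i) (hτB i)
      (hσB i _ (prod_ne_zero_iff.mp hσc i (mem_univ i)))
  exact hγc.ne' (devGain_eq_zero_of_isDevStationary U hγ hτ hτst hτc)

theorem eq_zero_of_forall_marginal_eq_zero [∀ i, Nonempty (C i)] (hα : IsDualVector U α)
    (hfull : IsFull U α) {i : N} {cᵢ : C i}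
    (hm : ∀ μ, IsCorrelatedEq U μ → marginal μ i cᵢ = 0) {σᵢ : C i → ℝ}
    (hσᵢ : σᵢ ∈ ReducedSet (α i)) : σᵢ cᵢ = 0 := by
  choose τ hτ using fun j => reducedSet_nonempty (hα.1 j)
  choose p hp using fun j => (hτ j).1.exists_ne_zero
  have hσ : ∀ j, Function.update τ i σᵢ j ∈ ReducedSet (α j) := fun j => by
    rcases eq_or_ne j i with rfl | hj
    · simpa using hσᵢ
    · simpa [hj] using hτ j
  have hc : ∀ μ, IsCorrelatedEq U μ → μ (Function.update p i cᵢ) = 0 := fun μ hμ =>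
    apply_eq_zero_of_marginal_eq_zero hμ.1 (hm μ hμ) (Function.update_self i cᵢ p)
  obtain ⟨j, -, hj⟩ := prod_eq_zero_iff.mp (prod_eq_zero_of_forall_isCorrelatedEq U hα hfull hc hσ)
  rcases eq_or_ne j i with rfl | hji
  · simpa using hj
  · exact absurd (by simpa [hji] using hj) (hp j)

end Games

theorem full_dual_reduction_eliminates_unplayed_general
    {N : Type} [Fintype N] [DecidableEq N]
    {C : N → Type} [∀ i, Fintype (C i)] [∀ i, DecidableEq (C i)] [∀ i, Nonempty (C i)]
    (U : ∀ i : N, (∀ j, C j) → ℝ) (α : ∀ i, C i → C i → ℝ)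
    (hα : IsDualVector U α) (hfull : IsFull U α) :
    (∀ c : ∀ j, C j, (∀ μ, IsCorrelatedEq U μ → μ c = 0) →
      ∀ σ : ∀ i, C i → ℝ, (∀ i, σ i ∈ ReducedSet (α i)) → (∏ i, σ i (c i)) = 0) ∧
    (∀ (i : N) (cᵢ : C i), (∀ μ, IsCorrelatedEq U μ → marginal μ i cᵢ = 0) →
      ∀ σᵢ ∈ ReducedSet (α i), σᵢ cᵢ = 0) :=
  ⟨fun _ hc _ hσ => prod_eq_zero_of_forall_isCorrelatedEq U hα hfull hc hσ,
    fun _ _ hm _ hσᵢ => eq_zero_of_forall_marginal_eq_zero U hα hfull hm hσᵢ⟩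

/-- In any full dual reduction, every pure strategy profile with probability zero in all
correlated equilibria, and every pure strategy with marginal probability zero in all
correlated equilibria, is eliminated. -/
theorem full_dual_reduction_eliminates_unplayed
    {N : Type} [Fintype N] [DecidableEq N] [Nonempty N]
    {C : N → Type} [∀ i, Fintype (C i)] [∀ i, DecidableEq (C i)] [∀ i, Nonempty (C i)]
    (U : ∀ i : N, (∀ j, C j) → ℝ) (α : ∀ i, C i → C i → ℝ)
    (hα : IsDualVector U α) (hfull : IsFull U α) :
    (∀ c : ∀ j, C j, (∀ μ, IsCorrelatedEq U μ → μ c = 0) →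
      ∀ σ : ∀ i, C i → ℝ, (∀ i, σ i ∈ ReducedSet (α i)) → (∏ i, σ i (c i)) = 0) ∧
    (∀ (i : N) (cᵢ : C i), (∀ μ, IsCorrelatedEq U μ → marginal μ i cᵢ = 0) →
      ∀ σᵢ ∈ ReducedSet (α i), σᵢ cᵢ = 0) :=
  full_dual_reduction_eliminates_unplayed_general U α hα hfull
end

section
/- For every Nash equilibrium σ = (σ_1, σ_2) of a finite two-player zero-sum game Γ, there exists a dual vector α of Γ such that C_i/α_i = {σ_i} for each player i; i.e., there is a dual reduction of Γ whose set of strategy profiles is the singleton {σ}. -/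
open scoped BigOperators

section Bimatrix

variable {S T : Type} [Fintype S] [Fintype T] [DecidableEq S] [DecidableEq T]

/-- `D(c, α)` for the two-player zero-sum game with payoff `u` to player 1 (and `-u`
to player 2), at the pure strategy profile `(s, t)`. -/
def devGain2 (u : S → T → ℝ) (α₁ : S → S → ℝ) (α₂ : T → T → ℝ) (s : S) (t : T) : ℝ :=
  ((∑ s', α₁ s s' * u s' t) - u s t) + ((∑ t', α₂ t t' * (-(u s t'))) - (-(u s t)))

/-- A dual vector of the two-player zero-sum game with payoff `u` to player 1. -/
def IsDualVector2 (u : S → T → ℝ) (α₁ : S → S → ℝ) (α₂ : T → T → ℝ) : Prop :=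
  (∀ s, IsMixed (α₁ s)) ∧ (∀ t, IsMixed (α₂ t)) ∧ ∀ s t, 0 ≤ devGain2 u α₁ α₂ s t

/-- Correlated equilibrium of the two-player zero-sum game with payoff `u` to player 1. -/
def IsCorrelatedEq2 (u : S → T → ℝ) (μ : S → T → ℝ) : Prop :=
  (∀ s t, 0 ≤ μ s t) ∧ (∑ s, ∑ t, μ s t) = 1 ∧
  (∀ s s' : S, ∑ t, μ s t * (u s' t - u s t) ≤ 0) ∧
  (∀ t t' : T, ∑ s, μ s t * ((-(u s t')) - (-(u s t))) ≤ 0)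

/-- A full dual vector of the two-player zero-sum game with payoff `u` to player 1. -/
def IsFull2 (u : S → T → ℝ) (α₁ : S → S → ℝ) (α₂ : T → T → ℝ) : Prop :=
  (∀ s s', (∃ (β₁ : S → S → ℝ) (β₂ : T → T → ℝ),
      IsDualVector2 u β₁ β₂ ∧ 0 < β₁ s s') → 0 < α₁ s s') ∧
  (∀ t t', (∃ (β₁ : S → S → ℝ) (β₂ : T → T → ℝ),
      IsDualVector2 u β₁ β₂ ∧ 0 < β₂ t t') → 0 < α₂ t t')

end Bimatrix

/-! The constant deviation plans `αᵢ c = σᵢ` do the job. Every strategy is sent to `σᵢ`, so `σᵢ`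
is the only `αᵢ`-stationary mixed strategy and `supp σᵢ` is the only minimal absorbing set.
For these plans `D((s, t), α) = U₁(σ₁, t) - U₁(s, σ₂)`, which is nonnegative because the
equilibrium conditions give `U₁(s, σ₂) ≤ U₁(σ₁, σ₂) ≤ U₁(σ₁, t)`. -/

section ConstantPlan

variable {S : Type} [Fintype S]

lemma devImage_const (σ : S → ℝ) {τ : S → ℝ} (hτ : ∑ s, τ s = 1) :
    devImage (fun _ => σ) τ = σ := by
  funext d
  simp only [devImage, ← Finset.sum_mul, hτ, one_mul]

lemma support_subset_of_isAbsorbing_const {σ : S → ℝ} (hσ : ∀ s, 0 ≤ σ s) {B : Finset S}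
    (hB : IsAbsorbing (fun _ => σ) B) : Finset.univ.filter (σ · ≠ 0) ⊆ B := by
  obtain ⟨⟨c, hc⟩, habs⟩ := hB
  intro d hd
  rw [Finset.mem_filter] at hd
  exact habs c hc d ((hσ d).lt_of_ne' hd.2)

lemma isMinimalAbsorbing_const_support {σ : S → ℝ} (hσ : IsMixed σ) :
    IsMinimalAbsorbing (fun _ => σ) (Finset.univ.filter (σ · ≠ 0)) := by
  have hsum : ∑ s, σ s ≠ 0 := by rw [hσ.2]; exact one_ne_zero
  obtain ⟨s, -, hs⟩ := Finset.exists_ne_zero_of_sum_ne_zero hsum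
  have habs : IsAbsorbing (fun _ => σ) (Finset.univ.filter (σ · ≠ 0)) :=
    ⟨⟨s, by simp [hs]⟩, fun _ _ d hd => by simp [hd.ne']⟩
  exact ⟨habs, fun B' hB' hB'abs =>
    hB'.antisymm (support_subset_of_isAbsorbing_const hσ.1 hB'abs)⟩

lemma reducedSet_const {σ : S → ℝ} (hσ : IsMixed σ) : ReducedSet (fun _ => σ) = {σ} := by
  ext τ
  constructor
  · rintro ⟨hτ, hstat, -⟩
    rw [Set.mem_singleton_iff, ← hstat, devImage_const σ hτ.2]
  · rintro rfl
    refine ⟨hσ, devImage_const τ hσ.2, _, isMinimalAbsorbing_const_support hσ, fun s hs => ?_⟩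
    simp [hs]

end ConstantPlan

lemma devGain2_const {S T : Type} [Fintype S] [Fintype T] (u : S → T → ℝ)
    (σ₁ : S → ℝ) (σ₂ : T → ℝ) (s : S) (t : T) :
    devGain2 u (fun _ => σ₁) (fun _ => σ₂) s t
      = ∑ s', σ₁ s' * u s' t - ∑ t', σ₂ t' * u s t' := by
  simp only [devGain2, mul_neg, Finset.sum_neg_distrib]
  ring

theorem zero_sum_reduction_to_nash_general
    {S T : Type} [Fintype S] [Fintype T]
    (u : S → T → ℝ) (σ₁ : S → ℝ) (σ₂ : T → ℝ)
    (h₁ : IsMixed σ₁) (h₂ : IsMixed σ₂)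
    (hNash₁ : ∀ s : S, ∑ t, σ₂ t * u s t ≤ ∑ s', ∑ t, σ₁ s' * σ₂ t * u s' t)
    (hNash₂ : ∀ t : T, ∑ s, ∑ t', σ₁ s * σ₂ t' * u s t' ≤ ∑ s, σ₁ s * u s t) :
    ∃ (α₁ : S → S → ℝ) (α₂ : T → T → ℝ), IsDualVector2 u α₁ α₂ ∧
      ReducedSet α₁ = {σ₁} ∧ ReducedSet α₂ = {σ₂} := by
  refine ⟨fun _ => σ₁, fun _ => σ₂, ⟨fun _ => h₁, fun _ => h₂, fun s t => ?_⟩,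
    reducedSet_const h₁, reducedSet_const h₂⟩
  rw [devGain2_const]
  linarith [hNash₁ s, hNash₂ t]

/-- For every Nash equilibrium `(σ₁, σ₂)` of a finite two-player zero-sum game, there is a
dual vector whose reduced strategy sets are the singletons `{σ₁}` and `{σ₂}`. -/
theorem zero_sum_reduction_to_nash
    {S T : Type} [Fintype S] [Fintype T] [DecidableEq S] [DecidableEq T]
    [Nonempty S] [Nonempty T]
    (u : S → T → ℝ) (σ₁ : S → ℝ) (σ₂ : T → ℝ)
    (h₁ : IsMixed σ₁) (h₂ : IsMixed σ₂)
    (hNash₁ : ∀ s : S, ∑ t, σ₂ t * u s t ≤ ∑ s', ∑ t, σ₁ s' * σ₂ t * u s' t)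
    (hNash₂ : ∀ t : T, ∑ s, ∑ t', σ₁ s * σ₂ t' * u s t' ≤ ∑ s, σ₁ s * u s t) :
    ∃ (α₁ : S → S → ℝ) (α₂ : T → T → ℝ), IsDualVector2 u α₁ α₂ ∧
      ReducedSet α₁ = {σ₁} ∧ ReducedSet α₂ = {σ₂} :=
  zero_sum_reduction_to_nash_general u σ₁ σ₂ h₁ h₂ hNash₁ hNash₂
end
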